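/- arXiv:math/0007118 — 8 statements merged into one kernel-verified Lean document; each statement's English description precedes it below -/
import Mathlib

section
/- Let a, b, c be polynomials over ℂ, not all constant, satisfying a + b + c = 0 and gcd(a, b) = 1. Then max(deg a, deg b, deg c) ≤ d₀(abc) − 1, where d₀(p) denotes the number of distinct roots of a polynomial p (without multiplicities). -/
open Polynomial UniqueFactorizationMonoid

lemma monic_of_mem_normalizedFactors {p q : Polynomial ℂ}
    (hq : q ∈ normalizedFactors p) : q.Monic := by
  have h1 : normalize q = q := normalize_normalized_factor q hq
  have h2 : q ≠ 0 := (prime_of_normalized_factor q hq).ne_zero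
  rw [← h1]
  exact monic_normalize h2

lemma primeFactors_card_eq (p : Polynomial ℂ) (hp : p ≠ 0) :
    (primeFactors p).card = p.roots.toFinset.card := by
  classical
  symm
  apply Finset.card_bij (fun r _ => X - C r)
  · intro r hr
    have hroot : IsRoot p r := by
      simpa using isRoot_of_mem_roots (Multiset.mem_toFinset.mp hr)
    have hdvd : X - C r ∣ p := dvd_iff_isRoot.mpr hroot
    obtain ⟨q, hq, hassoc⟩ :=
      exists_mem_normalizedFactors_of_dvd hp (irreducible_X_sub_C r) hdvd
    have : X - C r = q :=
      eq_of_monic_of_associated (monic_X_sub_C r) (monic_of_mem_normalizedFactors hq) hassoc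
    rw [this]
    exact mem_primeFactors.mpr hq
  · intro r hr s hs h
    have := congrArg (fun q => -(Polynomial.coeff q 0)) h
    simpa using this
  · intro q hq
    have hq' : q ∈ normalizedFactors p := by
      exact mem_primeFactors.mp hq
    have hprime : Prime q := prime_of_normalized_factor q hq'
    have hmonic : q.Monic := monic_of_mem_normalizedFactors hq'
    have hdeg : q.degree = 1 := IsAlgClosed.degree_eq_one_of_irreducible ℂ hprime.irreducible
    obtain ⟨r, hr⟩ := Complex.exists_root (by rw [hdeg]; norm_num)
    have hdvd : X - C r ∣ q := dvd_iff_isRoot.mpr hr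
    have hassoc : Associated (X - C r) q :=
      (irreducible_X_sub_C r).associated_of_dvd hprime.irreducible hdvd
    have heq : X - C r = q :=
      eq_of_monic_of_associated (monic_X_sub_C r) hmonic hassoc
    refine ⟨r, ?_, heq⟩
    rw [Multiset.mem_toFinset, mem_roots hp]
    exact hr.dvd (dvd_of_mem_normalizedFactors hq')

lemma radical_natDegree_eq (p : Polynomial ℂ) (hp : p ≠ 0) :
    (radical p).natDegree = p.roots.toFinset.card := by
  classical
  rw [← primeFactors_card_eq p hp]
  have hrad : radical p = ∏ q ∈ primeFactors p, q := rfl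
  rw [hrad, Polynomial.natDegree_prod _ _ (fun q hq => (prime_of_normalized_factor q
    (by exact mem_primeFactors.mp hq)).ne_zero)]
  rw [Finset.card_eq_sum_ones]
  apply Finset.sum_congr rfl
  intro q hq
  have hdeg : q.degree = 1 := IsAlgClosed.degree_eq_one_of_irreducible ℂ
    (prime_of_normalized_factor q (by exact mem_primeFactors.mp hq)).irreducible
  exact natDegree_eq_of_degree_eq_some hdeg

/-- Mason's abc-lemma: if `a + b + c = 0`, `gcd(a,b) = 1` and not all of `a, b, c`
are constant, then `max (deg a) (deg b) (deg c) ≤ d₀(abc) - 1`, where `d₀`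
counts distinct roots. -/
theorem mason_abc (a b c : Polynomial ℂ)
    (ha : a ≠ 0) (hb : b ≠ 0) (hc : c ≠ 0)
    (hnc : ¬ (a.natDegree = 0 ∧ b.natDegree = 0 ∧ c.natDegree = 0))
    (hsum : a + b + c = 0) (hcop : IsCoprime a b) :
    max (max a.natDegree b.natDegree) c.natDegree + 1 ≤
      (a * b * c).roots.toFinset.card := by
  have hceq : c = -a - b := by linear_combination hsum
  have hbc : IsCoprime b c := by
    rw [hceq]
    have : IsCoprime b (-a) := hcop.symm.neg_right
    have h2 := this.add_mul_left_right (-1)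
    simpa [mul_neg_one, sub_eq_add_neg] using h2
  have hca : IsCoprime c a := by
    rw [hceq]
    have : IsCoprime a (-b) := hcop.neg_right
    have h2 := this.add_mul_left_right (-1)
    apply IsCoprime.symm
    have : -b + a * -1 = -a - b := by ring
    rwa [this] at h2
  rcases Polynomial.abc ha hb hc hcop hsum with h | ⟨hda, hdb, hdc⟩
  · rw [← radical_natDegree_eq (a * b * c) (mul_ne_zero (mul_ne_zero ha hb) hc)]
    obtain ⟨h1, h2, h3⟩ := h
    omega
  · exact absurd ⟨natDegree_eq_zero_of_derivative_eq_zero hda,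
      natDegree_eq_zero_of_derivative_eq_zero hdb,
      natDegree_eq_zero_of_derivative_eq_zero hdc⟩ hnc
end

section
/- Let x, y, z ∈ ℂ[t] with z = x^k − y^l, where k, l ≥ 2 are coprime natural numbers, z ≠ 0, gcd(x, y) = 1, x and y are nonconstant, and deg z < max(k·deg x, l·deg y). If deg x = l·m and deg y = k·m for some natural number m ≥ 1, then deg z > m(kl − k − l). -/
open Polynomial UniqueFactorizationMonoid

/-- Davenport's lemma: if `z = x^k - y^l` with `k, l ≥ 2` coprime, `z ≠ 0`,
`gcd(x,y) = 1`, `x, y` nonconstant, `deg z < max (k·deg x) (l·deg y)`,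
`deg x = l·m` and `deg y = k·m` with `m ≥ 1`, then `deg z > m(kl - k - l)`. -/
theorem davenport (k l m : ℕ) (hk : 2 ≤ k) (hl : 2 ≤ l)
    (hkl : Nat.Coprime k l) (hm : 1 ≤ m)
    (x y z : Polynomial ℂ) (hz : z = x ^ k - y ^ l) (hz0 : z ≠ 0)
    (hcop : IsCoprime x y)
    (hx : x.natDegree ≠ 0) (hy : y.natDegree ≠ 0)
    (hdx : x.natDegree = l * m) (hdy : y.natDegree = k * m)
    (hdeg : z.natDegree < max (k * x.natDegree) (l * y.natDegree)) :
    m * (k * l - k - l) < z.natDegree := by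
  have hx0 : x ≠ 0 := fun h => hx (by simp [h])
  have hy0 : y ≠ 0 := fun h => hy (by simp [h])
  have hk0 : 0 < k := by omega
  have hl0 : 0 < l := by omega
  -- coprimality facts
  have hcxy : IsCoprime (x ^ k) (y ^ l) := hcop.pow
  have hczx : IsCoprime z (x ^ k) := by
    rw [hz]
    simpa [mul_neg_one, neg_sub, ← sub_eq_add_neg] using
      (IsCoprime.add_mul_left_left hcxy.symm (-1)).neg_left
  have hczy : IsCoprime z (y ^ l) := by
    rw [hz]
    simpa [mul_neg_one, ← sub_eq_add_neg] using
      IsCoprime.add_mul_left_left hcxy (-1)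
  -- apply Mason-Stothers with a = x^k, b = -y^l, c = -z
  have hsum : x ^ k + (-y ^ l) + (-z) = 0 := by rw [hz]; ring
  have habc := Polynomial.abc (pow_ne_zero k hx0) (neg_ne_zero.mpr (pow_ne_zero l hy0))
    (neg_ne_zero.mpr hz0) hcxy.neg_right
    hsum
  rcases habc with ⟨h1, -, -⟩ | ⟨hd, -, -⟩
  · -- degree bound
    have he : x ^ k * -y ^ l * -z = x ^ k * y ^ l * z := by ring
    rw [he] at h1
    have hrad : (radical (x ^ k * y ^ l * z)).natDegree
        ≤ x.natDegree + y.natDegree + z.natDegree := by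
      rw [radical_mul
          (IsCoprime.mul_left hczx.symm hczy.symm).isRelPrime,
        radical_mul hcxy.isRelPrime,
        radical_pow x hk0.ne', radical_pow y hl0.ne']
      have d1 : (radical x).natDegree ≤ x.natDegree :=
        natDegree_le_of_dvd (radical_dvd_self (a := x)) hx0
      have d2 : (radical y).natDegree ≤ y.natDegree :=
        natDegree_le_of_dvd (radical_dvd_self (a := y)) hy0
      have d3 : (radical z).natDegree ≤ z.natDegree :=
        natDegree_le_of_dvd (radical_dvd_self (a := z)) hz0
      have hrx0 : radical x ≠ 0 := radical_ne_zero (a := x)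
      have hry0 : radical y ≠ 0 := radical_ne_zero (a := y)
      have hrz0 : radical z ≠ 0 := radical_ne_zero (a := z)
      rw [natDegree_mul (mul_ne_zero hrx0 hry0) hrz0, natDegree_mul hrx0 hry0]
      omega
    have hdk : (x ^ k).natDegree = k * x.natDegree := natDegree_pow x k
    have hklm : k * l ≥ k + l := by nlinarith
    have : k * x.natDegree + 1 ≤ x.natDegree + y.natDegree + z.natDegree := by
      rw [← hdk]; linarith
    rw [hdx, hdy] at this
    obtain ⟨c, hc⟩ := Nat.le.dest hklm
    have hcc : k * l - k - l = c := by omega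
    have hexp : k * (l * m) = k * m + l * m + c * m := by
      calc k * (l * m) = (k * l) * m := by ring
        _ = (k + l + c) * m := by rw [hc]
        _ = k * m + l * m + c * m := by ring
    rw [hcc, Nat.mul_comm]
    linarith
  · -- derivative case is impossible over ℂ
    exfalso
    have := natDegree_eq_zero_of_derivative_eq_zero hd
    rw [natDegree_pow] at this
    exact hx ((Nat.mul_eq_zero.mp this).resolve_left (by omega))
end

section
/- Let k, l, m ≥ 2 with 1/k + 1/l + 1/m ≤ 1, and let x, y, z ∈ ℂ[t] satisfy x^k + y^l + z^m = 0 with not all of x, y, z constant. Then x, y, z have a common root in ℂ. -/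
open Polynomial UniqueFactorizationMonoid

private lemma halphen_coprime {p q : Polynomial ℂ}
    (h : ∀ t : ℂ, ¬(p.eval t = 0 ∧ q.eval t = 0)) : IsCoprime p q := by
  rw [Polynomial.isCoprime_iff_aeval_ne_zero_of_isAlgClosed (k := ℂ) ℂ p q]
  intro a
  have := h a
  simp only [coe_aeval_eq_eval]
  tauto

private lemma halphen_rad_deg {p : Polynomial ℂ} (hp : p ≠ 0) {k : ℕ} (hk : 0 < k) :
    (radical (p ^ k)).natDegree ≤ p.natDegree := by
  rw [radical_pow p hk.ne']
  exact natDegree_le_of_dvd (radical_dvd_self (a := p)) hp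

private lemma halphen_root_of_nonconst {p : Polynomial ℂ} (hp : p.natDegree ≠ 0) :
    ∃ t : ℂ, p.eval t = 0 := by
  obtain ⟨t, ht⟩ := Complex.isAlgClosed.exists_root p (fun h => hp (natDegree_eq_zero_iff_degree_le_zero.mpr h.le))
  exact ⟨t, ht⟩

/-- Strengthened Halphen's lemma: if `k, l, m ≥ 2` with `1/k + 1/l + 1/m ≤ 1`
and `x^k + y^l + z^m = 0` with not all of `x, y, z` constant, then `x, y, z`
have a common root. -/
theorem halphen_common_root (k l m : ℕ) (hk : 2 ≤ k) (hl : 2 ≤ l) (hm : 2 ≤ m)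
    (h : (1 : ℚ) / k + 1 / l + 1 / m ≤ 1)
    (x y z : Polynomial ℂ)
    (hnc : ¬ (x.natDegree = 0 ∧ y.natDegree = 0 ∧ z.natDegree = 0))
    (heq : x ^ k + y ^ l + z ^ m = 0) :
    ∃ t₀ : ℂ, x.eval t₀ = 0 ∧ y.eval t₀ = 0 ∧ z.eval t₀ = 0 := by
  have hk0 : 0 < k := by omega
  have hl0 : 0 < l := by omega
  have hm0 : 0 < m := by omega
  -- if two of them vanish at t, so does the third
  have key : ∀ t : ℂ, x.eval t = 0 → y.eval t = 0 → z.eval t = 0 := by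
    intro t hx hy
    have := congrArg (eval t) heq
    simp only [eval_add, eval_pow, hx, hy, eval_zero, zero_pow hk0.ne', zero_pow hl0.ne',
      zero_add] at this
    exact pow_eq_zero_iff hm0.ne' |>.mp this
  have keyxz : ∀ t : ℂ, x.eval t = 0 → z.eval t = 0 → y.eval t = 0 := by
    intro t hx hz
    have := congrArg (eval t) heq
    simp only [eval_add, eval_pow, hx, hz, eval_zero, zero_pow hk0.ne', zero_pow hm0.ne',
      zero_add, add_zero] at this
    exact pow_eq_zero_iff hl0.ne' |>.mp this
  have keyyz : ∀ t : ℂ, y.eval t = 0 → z.eval t = 0 → x.eval t = 0 := by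
    intro t hy hz
    have := congrArg (eval t) heq
    simp only [eval_add, eval_pow, hy, hz, eval_zero, zero_pow hl0.ne', zero_pow hm0.ne',
      add_zero] at this
    exact pow_eq_zero_iff hk0.ne' |>.mp this
  -- degenerate cases: one of the polynomials is zero
  by_cases hx0 : x = 0
  · subst hx0
    simp only [zero_pow hk0.ne', zero_add] at heq
    rcases Decidable.em (y.natDegree = 0) with hy | hy
    · rcases Decidable.em (z.natDegree = 0) with hz | hz
      · exact absurd ⟨rfl, hy, hz⟩ hnc
      · obtain ⟨t, ht⟩ := halphen_root_of_nonconst hz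
        exact ⟨t, by simp, keyxz t (by simp) ht, ht⟩
    · obtain ⟨t, ht⟩ := halphen_root_of_nonconst hy
      exact ⟨t, by simp, ht, key t (by simp) ht⟩
  by_cases hy0 : y = 0
  · subst hy0
    rcases Decidable.em (x.natDegree = 0) with hx | hx
    · rcases Decidable.em (z.natDegree = 0) with hz | hz
      · exact absurd ⟨hx, rfl, hz⟩ hnc
      · obtain ⟨t, ht⟩ := halphen_root_of_nonconst hz
        exact ⟨t, keyyz t (by simp) ht, by simp, ht⟩
    · obtain ⟨t, ht⟩ := halphen_root_of_nonconst hx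
      exact ⟨t, ht, by simp, key t ht (by simp)⟩
  by_cases hz0 : z = 0
  · subst hz0
    rcases Decidable.em (x.natDegree = 0) with hx | hx
    · rcases Decidable.em (y.natDegree = 0) with hy | hy
      · exact absurd ⟨hx, hy, rfl⟩ hnc
      · obtain ⟨t, ht⟩ := halphen_root_of_nonconst hy
        exact ⟨t, keyyz t ht (by simp), ht, by simp⟩
    · obtain ⟨t, ht⟩ := halphen_root_of_nonconst hx
      exact ⟨t, ht, keyxz t ht (by simp), by simp⟩
  -- main case
  by_contra hcon
  push_neg at hcon
  -- no common root of any pair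
  have hxy : IsCoprime x y := halphen_coprime fun t ⟨h1, h2⟩ => by
    have h3 := key t h1 h2
    exact (hcon t h1 h2) h3
  have hyz : IsCoprime y z := halphen_coprime fun t ⟨h1, h2⟩ => by
    have h3 := keyyz t h1 h2
    exact (hcon t h3 h1) h2
  have hzx : IsCoprime z x := halphen_coprime fun t ⟨h1, h2⟩ => by
    have h3 := keyxz t h2 h1
    exact (hcon t h2 h3) h1
  have hxk : (x : Polynomial ℂ) ^ k ≠ 0 := pow_ne_zero _ hx0
  have hyl : (y : Polynomial ℂ) ^ l ≠ 0 := pow_ne_zero _ hy0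
  have hzm : (z : Polynomial ℂ) ^ m ≠ 0 := pow_ne_zero _ hz0
  have habc := Polynomial.abc hxk hyl hzm (hxy.pow) heq
  rcases habc with ⟨h1, h2, h3⟩ | ⟨h1, h2, h3⟩
  · -- degree bound case
    have hrad : (radical (x ^ k * y ^ l * z ^ m)).natDegree
        ≤ x.natDegree + y.natDegree + z.natDegree := by
      rw [UniqueFactorizationMonoid.radical_mul ((hzx.pow).symm.mul_left (hyz.pow)).isRelPrime,
        UniqueFactorizationMonoid.radical_mul (hxy.pow).isRelPrime,
        Polynomial.natDegree_mul (mul_ne_zero radical_ne_zero radical_ne_zero)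
          radical_ne_zero,
        Polynomial.natDegree_mul radical_ne_zero radical_ne_zero]
      have e1 := halphen_rad_deg hx0 hk0
      have e2 := halphen_rad_deg hy0 hl0
      have e3 := halphen_rad_deg hz0 hm0
      omega
    rw [natDegree_pow] at h1 h2 h3
    set r := (radical (x ^ k * y ^ l * z ^ m)).natDegree
    -- pass to rationals
    have hkq : (0:ℚ) < (k:ℚ) := by positivity
    have hlq : (0:ℚ) < (l:ℚ) := by positivity
    have hmq : (0:ℚ) < (m:ℚ) := by positivity
    set dx := x.natDegree
    set dy := y.natDegree
    set dz := z.natDegree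
    have q1 : (k:ℚ) * dx + 1 ≤ (dx:ℚ) + dy + dz := by exact_mod_cast h1.trans hrad
    have q2 : (l:ℚ) * dy + 1 ≤ (dx:ℚ) + dy + dz := by exact_mod_cast h2.trans hrad
    have q3 : (m:ℚ) * dz + 1 ≤ (dx:ℚ) + dy + dz := by exact_mod_cast h3.trans hrad
    set d : ℚ := (dx:ℚ) + dy + dz with hd
    have hxq : (0:ℚ) ≤ (dx:ℚ) := by positivity
    have hyq : (0:ℚ) ≤ (dy:ℚ) := by positivity
    have hzq : (0:ℚ) ≤ (dz:ℚ) := by positivity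
    have hd1 : (1:ℚ) ≤ d := by nlinarith
    have e1 : (dx:ℚ) ≤ (d - 1) * (1 / k) := by
      rw [mul_one_div, le_div_iff₀ hkq]
      linarith
    have e2 : (dy:ℚ) ≤ (d - 1) * (1 / l) := by
      rw [mul_one_div, le_div_iff₀ hlq]
      linarith
    have e3 : (dz:ℚ) ≤ (d - 1) * (1 / m) := by
      rw [mul_one_div, le_div_iff₀ hmq]
      linarith
    have expand : (d - 1) * (1 / k + 1 / l + 1 / m)
        = (d - 1) * (1 / k) + (d - 1) * (1 / l) + (d - 1) * (1 / m) := by ring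
    have step1 : d ≤ (d - 1) * (1 / k + 1 / l + 1 / m) := by
      rw [expand, hd]
      linarith
    have step2 : (d - 1) * (1 / k + 1 / l + 1 / m) ≤ (d - 1) * 1 :=
      mul_le_mul_of_nonneg_left h (by linarith)
    linarith
  · -- derivative zero case
    have hxd := natDegree_eq_zero_of_derivative_eq_zero h1
    have hyd := natDegree_eq_zero_of_derivative_eq_zero h2
    have hzd := natDegree_eq_zero_of_derivative_eq_zero h3
    rw [natDegree_pow] at hxd hyd hzd
    exact hnc ⟨(Nat.mul_eq_zero.mp hxd).resolve_left (by omega),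
      (Nat.mul_eq_zero.mp hyd).resolve_left (by omega),
      (Nat.mul_eq_zero.mp hzd).resolve_left (by omega)⟩
end

section
/- Let B be a commutative ℂ-algebra which is an integral domain, ∂ : B → B a locally nilpotent derivation, and k, l ≥ 2 natural numbers. If a, b ∈ B satisfy a^k + b^l ∈ ker ∂ and a^k + b^l ≠ 0, then a ∈ ker ∂ and b ∈ ker ∂. -/
open Polynomial Finset UniqueFactorizationMonoid UniqueFactorizationDomain

/-! ### Iterated Leibniz rule -/

private lemma ml_pow_succ_apply {R A : Type*} [CommRing R] [CommRing A] [Algebra R A]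
    (D : Derivation R A A) (m : ℕ) (z : A) :
    ((D : A →ₗ[R] A) ^ (m + 1)) z = D (((D : A →ₗ[R] A) ^ m) z) := by
  rw [pow_succ']
  rfl

private lemma ml_pow_succ_apply'' {R A : Type*} [CommRing R] [CommRing A] [Algebra R A]
    (D : Derivation R A A) (m : ℕ) (z : A) :
    ((D : A →ₗ[R] A) ^ (m + 1)) z = ((D : A →ₗ[R] A) ^ m) (D z) := by
  rw [pow_succ]
  rfl

private lemma ml_iter_leibniz {R A : Type*} [CommRing R] [CommRing A] [Algebra R A]
    (D : Derivation R A A) (x y : A) (n : ℕ) :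
    ((D : A →ₗ[R] A) ^ n) (x * y)
      = ∑ i ∈ range (n + 1), n.choose i •
          ((((D : A →ₗ[R] A) ^ i) x) * (((D : A →ₗ[R] A) ^ (n - i)) y)) := by
  set Dl := (D : A →ₗ[R] A) with hDl
  induction n with
  | zero => simp
  | succ n ih =>
    rw [ml_pow_succ_apply, ih, map_sum]
    have hterm : ∀ i ∈ range (n + 1),
        D (n.choose i • ((Dl ^ i) x * (Dl ^ (n - i)) y))
          = n.choose i • ((Dl ^ (i + 1)) x * (Dl ^ (n - i)) y)
            + n.choose i • ((Dl ^ i) x * (Dl ^ (n - i + 1)) y) := by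
      intro i _
      rw [map_nsmul, D.leibniz, smul_add, ← ml_pow_succ_apply, ← ml_pow_succ_apply, ← hDl]
      simp only [smul_eq_mul]
      ring
    rw [Finset.sum_congr rfl hterm, Finset.sum_add_distrib]
    rw [Finset.sum_range_succ' (fun i => (n + 1).choose i •
      ((Dl ^ i) x * (Dl ^ (n + 1 - i)) y)) (n + 1)]
    have hpascal : ∀ i ∈ range (n + 1),
        (n + 1).choose (i + 1) • ((Dl ^ (i + 1)) x * (Dl ^ (n + 1 - (i + 1))) y)
          = n.choose i • ((Dl ^ (i + 1)) x * (Dl ^ (n - i)) y)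
            + n.choose (i + 1) • ((Dl ^ (i + 1)) x * (Dl ^ (n - i)) y) := by
      intro i _
      rw [Nat.choose_succ_succ, add_smul, Nat.succ_sub_succ]
    rw [Finset.sum_congr rfl hpascal, Finset.sum_add_distrib]
    have hB : ∑ i ∈ range (n + 1), n.choose i • ((Dl ^ i) x * (Dl ^ (n - i + 1)) y)
        = (∑ i ∈ range (n + 1), n.choose (i + 1) • ((Dl ^ (i + 1)) x * (Dl ^ (n - i)) y))
          + (Dl ^ 0) x * (Dl ^ (n + 1)) y := by
      rw [Finset.sum_range_succ' (fun i => n.choose i • ((Dl ^ i) x * (Dl ^ (n - i + 1)) y)) n,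
        Finset.sum_range_succ (fun i => n.choose (i + 1) •
          ((Dl ^ (i + 1)) x * (Dl ^ (n - i)) y)) n]
      simp only [Nat.choose_succ_self, zero_smul, add_zero, Nat.choose_zero_right, one_smul,
        Nat.sub_zero]
      congr 1
      refine Finset.sum_congr rfl fun i hi => ?_
      have hlt : i < n := Finset.mem_range.mp hi
      have : n - (i + 1) + 1 = n - i := by omega
      rw [this]
    rw [hB]
    simp only [Nat.choose_zero_right, one_smul, Nat.sub_zero]
    abel

/-! ### The polynomial endgame via Mason–Stothers -/

private lemma ml_poly_endgame {F : Type*} [Field F] [CharZero F] {k l : ℕ}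
    (hk : 2 ≤ k) (hl : 2 ≤ l) {P Q : F[X]} {γ : F} (hγ : γ ≠ 0)
    (h : P ^ k + Q ^ l = Polynomial.C γ) :
    P.natDegree = 0 ∧ Q.natDegree = 0 := by
  classical
  have hk0 : k ≠ 0 := by omega
  have hl0 : l ≠ 0 := by omega
  by_cases hP0 : P = 0
  · subst hP0
    have : Q ^ l = Polynomial.C γ := by simpa [zero_pow hk0] using h
    have hdeg : l * Q.natDegree = 0 := by
      rw [← natDegree_pow, this, natDegree_C]
    simp only [natDegree_zero, true_and]
    rcases Nat.mul_eq_zero.mp hdeg with h' | h' <;> omega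
  by_cases hQ0 : Q = 0
  · subst hQ0
    have : P ^ k = Polynomial.C γ := by simpa [zero_pow hl0] using h
    have hdeg : k * P.natDegree = 0 := by
      rw [← natDegree_pow, this, natDegree_C]
    simp only [natDegree_zero, and_true]
    rcases Nat.mul_eq_zero.mp hdeg with h' | h' <;> omega
  -- coprimality
  have hunit : ∀ z : F[X], IsCoprime (-(Polynomial.C γ)) z := fun z =>
    ⟨-(Polynomial.C γ⁻¹), 0, by
      rw [zero_mul, add_zero, neg_mul_neg, ← Polynomial.C_mul, inv_mul_cancel₀ hγ,
        Polynomial.C_1]⟩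
  have hPQ : IsCoprime P Q := by
    refine ⟨Polynomial.C γ⁻¹ * P ^ (k - 1), Polynomial.C γ⁻¹ * Q ^ (l - 1), ?_⟩
    have hk1 : k - 1 + 1 = k := by omega
    have hl1 : l - 1 + 1 = l := by omega
    calc Polynomial.C γ⁻¹ * P ^ (k - 1) * P + Polynomial.C γ⁻¹ * Q ^ (l - 1) * Q
        = Polynomial.C γ⁻¹ * (P ^ (k - 1 + 1) + Q ^ (l - 1 + 1)) := by ring
      _ = Polynomial.C γ⁻¹ * Polynomial.C γ := by rw [hk1, hl1, h]
      _ = 1 := by rw [← Polynomial.C_mul, inv_mul_cancel₀ hγ, Polynomial.C_1]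
  have hsum : P ^ k + Q ^ l + -(Polynomial.C γ) = 0 := by rw [h]; ring
  have habc := Polynomial.abc (pow_ne_zero k hP0) (pow_ne_zero l hQ0)
    (neg_ne_zero.mpr (fun hc => hγ (by simpa using Polynomial.C_injective (by simpa using hc))))
    (hPQ.pow) hsum
  rcases habc with ⟨h1, h2, -⟩ | ⟨d1, d2, -⟩
  · -- degree contradiction
    exfalso
    set R := (radical (P ^ k * Q ^ l * -(Polynomial.C γ))).natDegree with hR
    have hrad : radical (P ^ k * Q ^ l * -(Polynomial.C γ))
        = radical P * radical Q := by
      rw [radical_mul (hunit _).symm.isRelPrime,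
        radical_of_isUnit ((isUnit_C.mpr hγ.isUnit).neg), mul_one,
        radical_mul hPQ.pow.isRelPrime, radical_pow P (by omega), radical_pow Q (by omega)]
    have hRle : R ≤ P.natDegree + Q.natDegree := by
      rw [hR, hrad, Polynomial.natDegree_mul (radical_ne_zero (a := P)) (radical_ne_zero (a := Q))]
      exact Nat.add_le_add
        (Polynomial.natDegree_le_of_dvd (radical_dvd_self (a := P)) hP0)
        (Polynomial.natDegree_le_of_dvd (radical_dvd_self (a := Q)) hQ0)
    rw [Polynomial.natDegree_pow] at h1 h2
    have hkm : 2 * P.natDegree ≤ k * P.natDegree := Nat.mul_le_mul_right _ hk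
    have hln : 2 * Q.natDegree ≤ l * Q.natDegree := Nat.mul_le_mul_right _ hl
    omega
  · -- derivatives vanish
    constructor
    · apply Polynomial.natDegree_eq_zero_of_derivative_eq_zero
      rw [Polynomial.derivative_pow] at d1
      have hCk : (Polynomial.C (k : F)) ≠ 0 := by
        simpa using (Nat.cast_ne_zero (R := F)).mpr hk0
      rcases mul_eq_zero.mp d1 with h' | h'
      · rcases mul_eq_zero.mp h' with h'' | h''
        · exact absurd h'' hCk
        · exact absurd h'' (pow_ne_zero _ hP0)
      · exact h'
    · apply Polynomial.natDegree_eq_zero_of_derivative_eq_zero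
      rw [Polynomial.derivative_pow] at d2
      rcases mul_eq_zero.mp d2 with h' | h'
      · rcases mul_eq_zero.mp h' with h'' | h''
        · exact absurd h'' (by simpa using (Nat.cast_ne_zero (R := F)).mpr hl0)
        · exact absurd h'' (pow_ne_zero _ hQ0)
      · exact h'

/-! ### The Taylor map -/

section Taylor

variable {B : Type*} [CommRing B] [IsDomain B] [Algebra ℂ B]
  (D : Derivation ℂ B B)
  (hD : ∀ b : B, ∃ n : ℕ, ((D : B →ₗ[ℂ] B) ^ n) b = 0)

local notation "F" => FractionRing B

noncomputable def mlCoef (x : B) (n : ℕ) : F :=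
  ((n.factorial : F))⁻¹ * algebraMap B F (((D : B →ₗ[ℂ] B) ^ n) x)

noncomputable def mlTay (x : B) : Polynomial F :=
  ∑ i ∈ range ((hD x).choose + 1), Polynomial.C (mlCoef D x i) * X ^ i

lemma ml_iter_zero (x : B) {m : ℕ} (hm : (hD x).choose ≤ m) :
    ((D : B →ₗ[ℂ] B) ^ m) x = 0 := by
  obtain ⟨j, rfl⟩ := Nat.exists_eq_add_of_le hm
  rw [add_comm, pow_add, Module.End.mul_apply, (hD x).choose_spec, map_zero]

lemma mlCoef_eq_zero (x : B) {m : ℕ} (hm : (hD x).choose ≤ m) : mlCoef D x m = 0 := by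
  rw [mlCoef, ml_iter_zero D hD x hm, map_zero, mul_zero]

lemma mlTay_coeff (x : B) (n : ℕ) : (mlTay D hD x).coeff n = mlCoef D x n := by
  rw [mlTay]
  simp only [finset_sum_coeff, coeff_C_mul, coeff_X_pow, mul_ite, mul_one, mul_zero]
  rw [Finset.sum_ite_eq (range ((hD x).choose + 1)) n (mlCoef D x)]
  split_ifs with hn
  · rfl
  · exact (mlCoef_eq_zero D hD x (by
      simp only [Finset.mem_range, Nat.lt_succ_iff] at hn; omega)).symm

lemma mlTay_add (x y : B) : mlTay D hD (x + y) = mlTay D hD x + mlTay D hD y := by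
  ext n
  rw [Polynomial.coeff_add, mlTay_coeff, mlTay_coeff, mlTay_coeff, mlCoef, mlCoef, mlCoef,
    map_add, map_add, mul_add]

lemma mlTay_mul (x y : B) : mlTay D hD (x * y) = mlTay D hD x * mlTay D hD y := by
  haveI : CharZero B := charZero_of_injective_algebraMap (algebraMap ℂ B).injective
  haveI : CharZero F := charZero_of_injective_algebraMap (IsFractionRing.injective B (F))
  ext n
  rw [Polynomial.coeff_mul, mlTay_coeff]
  have : ∀ p ∈ Finset.HasAntidiagonal.antidiagonal n, (mlTay D hD x).coeff p.1 * (mlTay D hD y).coeff p.2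
      = mlCoef D x p.1 * mlCoef D y p.2 := fun p _ => by rw [mlTay_coeff, mlTay_coeff]
  rw [Finset.sum_congr rfl this, Finset.Nat.sum_antidiagonal_eq_sum_range_succ_mk]
  rw [mlCoef, ml_iter_leibniz, map_sum, Finset.mul_sum]
  refine Finset.sum_congr rfl fun i hi => ?_
  have hin : i ≤ n := Nat.lt_succ_iff.mp (Finset.mem_range.mp hi)
  rw [map_nsmul, nsmul_eq_mul, map_mul, mlCoef, mlCoef]
  have hfact : (n.factorial : F)⁻¹ * (n.choose i : F) = (i.factorial : F)⁻¹ * ((n - i).factorial : F)⁻¹ := by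
    have := Nat.choose_mul_factorial_mul_factorial hin
    have hcast : (n.choose i : F) * (i.factorial : F) * ((n - i).factorial : F) = (n.factorial : F) := by
      exact_mod_cast congrArg (Nat.cast : ℕ → F) this
    have h0 : (n.factorial : F) ≠ 0 := Nat.cast_ne_zero.mpr n.factorial_ne_zero
    have h1 : (i.factorial : F) ≠ 0 := Nat.cast_ne_zero.mpr i.factorial_ne_zero
    have h2 : ((n - i).factorial : F) ≠ 0 := Nat.cast_ne_zero.mpr (n - i).factorial_ne_zero
    field_simp
    linear_combination hcast
  push_cast
  calc (n.factorial : F)⁻¹ * ((n.choose i : F) *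
        (algebraMap B F (((D : B →ₗ[ℂ] B) ^ i) x) *
          algebraMap B F (((D : B →ₗ[ℂ] B) ^ (n - i)) y)))
      = ((n.factorial : F)⁻¹ * (n.choose i : F)) *
        (algebraMap B F (((D : B →ₗ[ℂ] B) ^ i) x) *
          algebraMap B F (((D : B →ₗ[ℂ] B) ^ (n - i)) y)) := by ring
    _ = _ := by rw [hfact]; ring

lemma mlTay_one : mlTay D hD 1 = 1 := by
  ext n
  rw [mlTay_coeff, Polynomial.coeff_one]
  rcases n with _ | m
  · simp [mlCoef]
  · have : ((D : B →ₗ[ℂ] B) ^ (m + 1)) 1 = 0 := by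
      rw [ml_pow_succ_apply'', D.map_one_eq_zero, map_zero]
    simp [mlCoef, this]

lemma mlTay_pow (x : B) (m : ℕ) : mlTay D hD (x ^ m) = (mlTay D hD x) ^ m := by
  induction m with
  | zero => simpa using mlTay_one D hD
  | succ m ih => rw [pow_succ, pow_succ, mlTay_mul, ih]

lemma mlTay_of_ker (x : B) (hx : D x = 0) :
    mlTay D hD x = Polynomial.C (algebraMap B F x) := by
  ext n
  rw [mlTay_coeff, Polynomial.coeff_C]
  rcases n with _ | m
  · simp [mlCoef]
  · have : ((D : B →ₗ[ℂ] B) ^ (m + 1)) x = 0 := by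
      rw [ml_pow_succ_apply'']
      show ((D : B →ₗ[ℂ] B) ^ m) (D x) = 0
      rw [hx, map_zero]
    simp [mlCoef, this]

end Taylor

/-- Makar-Limanov's lemma: if `∂` is a locally nilpotent derivation of a
ℂ-algebra domain `B`, `k, l ≥ 2` and `a^k + b^l ∈ ker ∂ \ {0}`, then
`a, b ∈ ker ∂`. -/
theorem makar_limanov_kernel
    (B : Type*) [CommRing B] [IsDomain B] [Algebra ℂ B]
    (D : Derivation ℂ B B)
    (hD : ∀ b : B, ∃ n : ℕ, ((D : B →ₗ[ℂ] B) ^ n) b = 0)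
    (k l : ℕ) (hk : 2 ≤ k) (hl : 2 ≤ l)
    (a b : B) (hab : D (a ^ k + b ^ l) = 0) (hne : a ^ k + b ^ l ≠ 0) :
    D a = 0 ∧ D b = 0 := by
  have hinj : Function.Injective (algebraMap B (FractionRing B)) :=
    IsFractionRing.injective B (FractionRing B)
  haveI : CharZero B := charZero_of_injective_algebraMap (algebraMap ℂ B).injective
  haveI : CharZero (FractionRing B) := charZero_of_injective_algebraMap hinj
  have key : (mlTay D hD a) ^ k + (mlTay D hD b) ^ l
      = Polynomial.C (algebraMap B (FractionRing B) (a ^ k + b ^ l)) := by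
    rw [← mlTay_pow, ← mlTay_pow, ← mlTay_add, mlTay_of_ker D hD _ hab]
  have hγ : algebraMap B (FractionRing B) (a ^ k + b ^ l) ≠ 0 := fun hc =>
    hne (hinj (by simpa using hc))
  obtain ⟨hPa, hPb⟩ := ml_poly_endgame hk hl hγ key
  have coeff_one : ∀ x : B, (mlTay D hD x).natDegree = 0 → D x = 0 := by
    intro x hx
    have h1 : (mlTay D hD x).coeff 1 = 0 := by
      rw [Polynomial.eq_C_of_natDegree_eq_zero hx, Polynomial.coeff_C]
      simp
    rw [mlTay_coeff] at h1
    have : algebraMap B (FractionRing B) (D x) = 0 := by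
      have h2 : ((D : B →ₗ[ℂ] B) ^ 1) x = D x := by rw [pow_one]; rfl
      rw [mlCoef, h2] at h1
      simpa using h1
    exact hinj (by simpa using this)
  exact ⟨coeff_one a hPa, coeff_one b hPb⟩
end

section
/- The polynomial p̂ = u^m·v + x^k·z^{k−1} − y^l·z^{l−1} ∈ ℂ[x,y,z,u,v] is irreducible, for all natural numbers m ≥ 2 and k > l ≥ 3 with gcd(k,l) = 1. -/
open MvPolynomial

private lemma linear_irred {R : Type*} [CommRing R] [IsDomain R] {A B : R} (hA : A ≠ 0)
    (h : ∀ c : R, c ∣ A → c ∣ B → IsUnit c) :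
    Irreducible (Polynomial.C A * Polynomial.X + Polynomial.C B) := by
  set p : Polynomial R := Polynomial.C A * Polynomial.X + Polynomial.C B with hp
  have hdeg : p.natDegree = 1 := Polynomial.natDegree_linear hA
  have hc1 : p.coeff 1 = A := by simp [hp]
  have hc0 : p.coeff 0 = B := by simp [hp]
  have hp0 : p ≠ 0 := fun h0 => by simp [h0] at hdeg
  constructor
  · intro hu
    have := Polynomial.natDegree_eq_zero_of_isUnit hu
    omega
  · intro f g hfg
    have hf0 : f ≠ 0 := by rintro rfl; rw [zero_mul] at hfg; exact hp0 hfg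
    have hg0 : g ≠ 0 := by rintro rfl; rw [mul_zero] at hfg; exact hp0 hfg
    have hsum : f.natDegree + g.natDegree = 1 := by
      rw [← Polynomial.natDegree_mul hf0 hg0, ← hfg, hdeg]
    rcases Nat.eq_zero_or_pos g.natDegree with hg | hgpos
    · obtain ⟨c, hc⟩ := Polynomial.natDegree_eq_zero.mp hg
      right
      rw [← hc, Polynomial.isUnit_C]
      refine h c ?_ ?_
      · exact ⟨f.coeff 1, by rw [← hc1, hfg, ← hc, Polynomial.coeff_mul_C, mul_comm]⟩
      · exact ⟨f.coeff 0, by rw [← hc0, hfg, ← hc, Polynomial.coeff_mul_C, mul_comm]⟩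
    · have hf : f.natDegree = 0 := by omega
      obtain ⟨c, hc⟩ := Polynomial.natDegree_eq_zero.mp hf
      left
      rw [← hc, Polynomial.isUnit_C]
      refine h c ?_ ?_
      · exact ⟨g.coeff 1, by rw [← hc1, hfg, ← hc, Polynomial.coeff_C_mul]⟩
      · exact ⟨g.coeff 0, by rw [← hc0, hfg, ← hc, Polynomial.coeff_C_mul]⟩

private lemma prime_X2 : Prime (X 2 : MvPolynomial (Fin 4) ℂ) := by
  rw [← MulEquiv.prime_iff ((renameEquiv ℂ (Equiv.swap (2:Fin 4) 0)).trans (finSuccEquiv ℂ 3)).toMulEquiv]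
  have : ((renameEquiv ℂ (Equiv.swap (2:Fin 4) 0)).trans (finSuccEquiv ℂ 3)).toMulEquiv
      (X 2 : MvPolynomial (Fin 4) ℂ) = Polynomial.X := by
    rw [show ((renameEquiv ℂ (Equiv.swap (2:Fin 4) 0)).trans (finSuccEquiv ℂ 3)).toMulEquiv
      (X 2 : MvPolynomial (Fin 4) ℂ) = (finSuccEquiv ℂ 3) (rename (Equiv.swap (2:Fin 4) 0) (X 2)) from rfl]
    rw [rename_X, Equiv.swap_apply_left, finSuccEquiv_X_zero]
  rw [this]
  exact Polynomial.prime_X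

/-- The polynomial `p̂ = u^m v + x^k z^(k-1) - y^l z^(l-1)` is irreducible in
`ℂ[x,y,z,u,v]`, for `m ≥ 2`, `k > l ≥ 3`, `gcd(k,l) = 1`.
Variables: `x = X 0`, `y = X 1`, `z = X 2`, `u = X 3`, `v = X 4`. -/
theorem phat_irreducible (m k l : ℕ) (hm : 2 ≤ m) (hl : 3 ≤ l) (hkl : l < k)
    (hcop : Nat.Coprime k l) :
    Irreducible
      (X 3 ^ m * X 4 + X 0 ^ k * X 2 ^ (k - 1) - X 1 ^ l * X 2 ^ (l - 1) :
        MvPolynomial (Fin 5) ℂ) := by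
  set φ : MvPolynomial (Fin 5) ℂ ≃ₐ[ℂ] Polynomial (MvPolynomial (Fin 4) ℂ) :=
    (renameEquiv ℂ (Equiv.swap 0 4)).trans (finSuccEquiv ℂ 4) with hφ
  rw [← MulEquiv.irreducible_iff φ.toMulEquiv]
  set B : MvPolynomial (Fin 4) ℂ := X 3 ^ k * X 1 ^ (k-1) - X 0 ^ l * X 1 ^ (l-1) with hB
  have key : φ.toMulEquiv (X 3 ^ m * X 4 + X 0 ^ k * X 2 ^ (k - 1) - X 1 ^ l * X 2 ^ (l - 1)) =
      Polynomial.C ((X 2 : MvPolynomial (Fin 4) ℂ) ^ m) * Polynomial.X + Polynomial.C B := by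
    have h1 : ((1:Fin 5)) = Fin.succ (0 : Fin 4) := rfl
    have h2 : ((2:Fin 5)) = Fin.succ (1 : Fin 4) := rfl
    have h3 : ((3:Fin 5)) = Fin.succ (2 : Fin 4) := rfl
    have h4 : ((4:Fin 5)) = Fin.succ (3 : Fin 4) := rfl
    rw [show φ.toMulEquiv (X 3 ^ m * X 4 + X 0 ^ k * X 2 ^ (k - 1) - X 1 ^ l * X 2 ^ (l - 1)) =
      (finSuccEquiv ℂ 4) ((renameEquiv ℂ (Equiv.swap 0 4))
      (X 3 ^ m * X 4 + X 0 ^ k * X 2 ^ (k - 1) - X 1 ^ l * X 2 ^ (l - 1))) from rfl]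
    simp only [renameEquiv_apply, map_add, map_sub, map_mul, map_pow,
      rename_X, Equiv.swap_apply_left, Equiv.swap_apply_right]
    rw [show (Equiv.swap (0:Fin 5) 4) 1 = 1 by decide,
      show (Equiv.swap (0:Fin 5) 4) 2 = 2 by decide,
      show (Equiv.swap (0:Fin 5) 4) 3 = 3 by decide]
    rw [h1, h2, h3, h4]
    simp only [map_add, map_sub, map_mul, map_pow, finSuccEquiv_X_zero, finSuccEquiv_X_succ]
    rw [hB]; simp only [map_sub, map_mul, map_pow]; ring
  rw [key]
  -- X 2 does not divide B
  have hndvd : ¬ (X 2 : MvPolynomial (Fin 4) ℂ) ∣ B := by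
    intro ⟨t, ht⟩
    have := congrArg (eval (fun i : Fin 4 => if i = 0 then (0:ℂ) else if i = 2 then 0 else 1)) ht
    simp [hB, zero_pow (by omega : l ≠ 0), zero_pow (by omega : k ≠ 0)] at this
  refine linear_irred (pow_ne_zero _ (X_ne_zero _)) ?_
  intro c hcA hcB
  obtain ⟨i, hi, hassoc⟩ := (dvd_prime_pow prime_X2 m).mp hcA
  rcases Nat.eq_zero_or_pos i with rfl | hipos
  · rw [pow_zero] at hassoc
    exact hassoc.symm.isUnit isUnit_one
  · exfalso
    exact hndvd (dvd_trans (dvd_trans (dvd_pow_self _ (by omega)) hassoc.symm.dvd) hcB)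
end

section
/- Let k > l ≥ 2. For generic c' ∈ ℂ (in fact for all but finitely many c') and any c_i ∈ ℂ*, the affine plane curve {x^{l·k'} + ((x^{k'} − c')/c_i)^l + z^m = 0} ⊂ ℂ², with k', m ≥ 2 and m coprime to l·k', is not isomorphic to the affine line ℂ unless k' = 1 and l = 2 and c_i² = −1. -/
open Polynomial

lemma coeff_sub_pow (k' l : ℕ) (hk' : 1 ≤ k') (hl : 1 ≤ l) (c' : ℂ) :
    ((X ^ k' - C c') ^ l).coeff ((l - 1) * k') = l * (-c') := by
  rw [sub_eq_add_neg, ← C_neg, add_pow, finset_sum_coeff]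
  have hterm : ∀ i, (((X:ℂ[X]) ^ k') ^ i * C (-c') ^ (l - i) * (l.choose i : ℂ[X])).coeff
      ((l - 1) * k') = if k' * i = (l - 1) * k' then ((-c') ^ (l - i) * (l.choose i : ℂ)) else 0 := by
    intro i
    have h : ((X:ℂ[X]) ^ k') ^ i * C (-c') ^ (l - i) * (l.choose i : ℂ[X])
        = C ((-c') ^ (l - i) * (l.choose i : ℂ)) * X ^ (k' * i) := by
      rw [← pow_mul, ← C_pow, ← C_eq_natCast, C_mul]; ring
    rw [h, coeff_C_mul, coeff_X_pow]
    simp only [mul_ite, mul_one, mul_zero]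
    congr 1
    simp [eq_comm]
  rw [Finset.sum_congr rfl fun i _ => hterm i]
  rw [Finset.sum_eq_single_of_mem (l - 1) (by simp [Finset.mem_range])]
  · rw [if_pos (by ring)]
    have h1 : l - (l - 1) = 1 := by omega
    have h2 : l.choose (l - 1) = l := by
      have := Nat.choose_symm (by omega : 1 ≤ l)
      rw [this, Nat.choose_one_right]
    rw [h1, h2]; ring
  · intro i _ hi
    rw [if_neg]
    intro h
    exact hi (by
      exact Nat.eq_of_mul_eq_mul_left (show 0 < k' by omega) (show k' * i = k' * (l - 1) by rw [h, mul_comm]))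


lemma sep_aux (k' l : ℕ) (hk' : 1 ≤ k') (hl : 2 ≤ l) (a c' : ℂ) (ha : a ≠ 0) (hc : c' ≠ 0)
    (r : ℂ) (h1 : (C a * X ^ (l * k') + (X ^ k' - C c') ^ l).eval r = 0)
    (h2 : (derivative (C a * X ^ (l * k') + (X ^ k' - C c') ^ l)).eval r = 0) : False := by
  simp only [eval_add, eval_mul, eval_pow, eval_sub, eval_C, eval_X] at h1
  simp only [derivative_add, derivative_C_mul, derivative_pow, derivative_sub, derivative_X_pow,
    derivative_C, sub_zero, derivative_X, eval_add, eval_mul, eval_pow, eval_sub, eval_C, eval_X,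
    eval_one, mul_one, eval_natCast] at h2
  rcases eq_or_ne r 0 with rfl | hr
  · rw [zero_pow (Nat.mul_ne_zero (by omega) (by omega) : l * k' ≠ 0), zero_pow (by omega : k' ≠ 0), mul_zero,
      zero_add, zero_sub] at h1
    exact hc (by simpa [pow_eq_zero_iff (by omega : l ≠ 0)] using h1)
  · set T : ℂ := r ^ k' with hT
    set S : ℂ := T - c' with hS
    have hp1 : r ^ (l * k') = T ^ l := by rw [hT, mul_comm, pow_mul]
    have hp2 : r ^ (l * k' - 1) * r = T ^ l := by
      rw [← pow_succ, Nat.sub_add_cancel (Nat.one_le_iff_ne_zero.mpr (Nat.mul_ne_zero (by omega) (by omega))), hp1]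
    have hp3 : r ^ (k' - 1) * r = T := by rw [← pow_succ, Nat.sub_add_cancel hk']
    have h1' : a * T ^ l + S ^ l = 0 := by rw [← hp1]; exact h1
    have key : ((l : ℂ) * (k' : ℂ)) * (a * T ^ l + S ^ (l - 1) * T) = 0 := by
      push_cast at h2
      linear_combination r * h2 - a * ((l : ℂ) * (k' : ℂ)) * hp2
        - ((l : ℂ) * (k' : ℂ)) * S ^ (l - 1) * hp3
    have key2 : a * T ^ l + S ^ (l - 1) * T = 0 := by
      rcases mul_eq_zero.mp key with h | h
      · exact absurd h (by
          simp [Nat.cast_ne_zero]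
          omega)
      · exact h
    have hSl : S ^ l = S ^ (l - 1) * S := by
      rw [← pow_succ, Nat.sub_add_cancel (by omega)]
    have hS0 : S ^ (l - 1) * c' = 0 := by
      linear_combination key2 - h1' + hSl + S ^ (l - 1) * hS
    have hS' : S = 0 := by
      rcases mul_eq_zero.mp hS0 with h | h
      · exact pow_eq_zero_iff (by omega : l - 1 ≠ 0) |>.mp h
      · exact absurd h hc
    have hT0 : T = 0 := by
      have : a * T ^ l = 0 := by
        rw [hS', zero_pow (by omega : l ≠ 0), add_zero] at h1'; exact h1'
      rcases mul_eq_zero.mp this with h | h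
      · exact absurd h ha
      · exact pow_eq_zero_iff (by omega : l ≠ 0) |>.mp h
    exact hc (by rw [hT0] at hS; simpa [hS'] using hS.symm)


/-- For `l ≥ 2`, `m ≥ 2` with `m` coprime to `l·k'`, `cᵢ ∈ ℂ*`, and
`l ≥ 3` or `k' ≥ 2` (i.e. we are not in the exceptional case `k' = 1`,
`l = 2`), for all but finitely many `c' ∈ ℂ` the affine plane curve
`x^(l·k') + ((x^(k') - c')/cᵢ)^l + z^m = 0` is not isomorphic to `ℂ`: it
admits no polynomial parameterization `(x(t), z(t))` with `x` nonconstant.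
(The defining equation is cleared of its denominator `cᵢ^l`.) -/
theorem fiber_curve_not_affine_line (k' l m : ℕ) (hk' : 1 ≤ k') (hl : 2 ≤ l)
    (hm : 2 ≤ m) (hexc : 3 ≤ l ∨ 2 ≤ k') (hcop : Nat.Coprime m (l * k'))
    (ci : ℂ) (hci : ci ≠ 0) :
    ∃ S : Finset ℂ, ∀ c' : ℂ, c' ∉ S →
      ¬ ∃ x z : Polynomial ℂ, x.natDegree ≠ 0 ∧
          C (ci ^ l) * x ^ (l * k') + (x ^ k' - C c') ^ l
            + C (ci ^ l) * z ^ m = 0 := by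
  refine ⟨{0}, fun c' hc' => ?_⟩
  rintro ⟨x, z, hx, heq⟩
  have hc0 : c' ≠ 0 := by simpa using hc'
  set a : ℂ := ci ^ l with ha
  have ha0 : a ≠ 0 := pow_ne_zero _ hci
  have hlk : l * k' ≠ 0 := Nat.mul_ne_zero (by omega) (by omega)
  set F : ℂ[X] := C a * X ^ (l * k') + (X ^ k' - C c') ^ l with hF
  -- F is nonzero
  have hFne : F ≠ 0 := by
    intro h
    have : F.eval 0 = (-c') ^ l := by
      rw [hF]
      simp only [eval_add, eval_mul, eval_pow, eval_sub, eval_C, eval_X]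
      rw [zero_pow hlk, zero_pow (by omega : k' ≠ 0), mul_zero, zero_add, zero_sub]
    rw [h, eval_zero] at this
    exact pow_ne_zero l (neg_ne_zero.mpr hc0) this.symm
  -- F is separable
  have hsep : IsCoprime F (derivative F) := by
    rw [← EuclideanDomain.gcd_isUnit_iff]
    by_contra hgu
    set g := EuclideanDomain.gcd F (derivative F) with hg
    have hg1 : g ∣ F := EuclideanDomain.gcd_dvd_left _ _
    have hg2 : g ∣ derivative F := EuclideanDomain.gcd_dvd_right _ _
    have hdeg : g.degree ≠ 0 := fun h => hgu (isUnit_iff_degree_eq_zero.mpr h)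
    obtain ⟨r, hr⟩ := Complex.isAlgClosed.exists_root g hdeg
    exact sep_aux k' l hk' hl a c' ha0 hc0 r
      (eval_eq_zero_of_dvd_of_eval_eq_zero hg1 hr)
      (eval_eq_zero_of_dvd_of_eval_eq_zero hg2 hr)
  -- main equation
  have hFx : F.comp x = -(C a * z ^ m) := by
    rw [hF]
    simp only [add_comp, mul_comp, pow_comp, sub_comp, C_comp, X_comp]
    linear_combination heq
  -- coprimality after composition
  obtain ⟨u, v, huv⟩ := hsep
  have hco : IsCoprime (F.comp x) ((derivative F).comp x) :=
    ⟨u.comp x, v.comp x, by rw [← mul_comp, ← mul_comp, ← add_comp, huv, one_comp]⟩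
  rcases eq_or_ne z 0 with rfl | hz
  · rw [zero_pow (by omega : m ≠ 0), mul_zero, neg_zero] at hFx
    rcases comp_eq_zero_iff.mp hFx with h | ⟨-, h⟩
    · exact hFne h
    · exact hx (by rw [h, natDegree_C])
  -- derivative divisibility
  have hderiv : derivative x * (derivative F).comp x
      = -(C a * (C (m : ℂ) * z ^ (m - 1) * derivative z)) := by
    have h := congrArg derivative hFx
    rw [derivative_comp, derivative_neg, derivative_mul, derivative_C, zero_mul, zero_add,
      derivative_pow] at h
    exact h
  have hdvd1 : z ^ (m - 1) ∣ F.comp x := by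
    rw [hFx]
    exact (dvd_neg).mpr ((pow_dvd_pow z (by omega : m - 1 ≤ m)).trans (dvd_mul_left _ _))
  have hcz : IsCoprime (z ^ (m - 1)) ((derivative F).comp x) :=
    hco.of_isCoprime_of_dvd_left hdvd1
  have hdvd2 : z ^ (m - 1) ∣ derivative x := by
    refine hcz.dvd_of_dvd_mul_left ?_
    rw [mul_comm, hderiv]
    exact (dvd_neg).mpr ⟨C a * C (m:ℂ) * derivative z, by ring⟩
  have hx' : derivative x ≠ 0 := fun h => hx (natDegree_eq_zero_of_derivative_eq_zero h)
  -- degree comparisons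
  have hdb : (m - 1) * z.natDegree < x.natDegree := by
    have h1 := natDegree_le_of_dvd hdvd2 hx'
    rw [natDegree_pow] at h1
    exact lt_of_le_of_lt h1 (natDegree_derivative_lt hx)
  have hde : F.natDegree * x.natDegree = m * z.natDegree := by
    have h := congrArg natDegree hFx
    rwa [natDegree_comp, natDegree_neg, natDegree_C_mul ha0, natDegree_pow] at h
  -- F has degree at least 2
  have hD2 : 2 ≤ F.natDegree := by
    rcases eq_or_ne (a + 1) 0 with hA | hA
    · -- a = -1 : use coefficient at (l-1)*k'
      have hco2 : F.coeff ((l - 1) * k') = (l : ℂ) * (-c') := by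
        rw [hF, coeff_add, coeff_C_mul, coeff_X_pow,
          if_neg (by
            intro h
            have := Nat.eq_of_mul_eq_mul_right (show 0 < k' by omega) h
            omega), mul_zero, zero_add]
        exact coeff_sub_pow k' l hk' (by omega) c'
      have : (l - 1) * k' ≤ F.natDegree := le_natDegree_of_ne_zero (by
        rw [hco2]
        exact mul_ne_zero (Nat.cast_ne_zero.mpr (by omega)) (neg_ne_zero.mpr hc0))
      have h2 : 2 ≤ (l - 1) * k' := by
        rcases hexc with h | h
        · calc 2 ≤ (l - 1) * 1 := by omega
            _ ≤ (l - 1) * k' := Nat.mul_le_mul_left _ hk'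
        · calc 2 ≤ 1 * k' := by omega
            _ ≤ (l - 1) * k' := Nat.mul_le_mul_right _ (by omega)
      omega
    · -- a + 1 ≠ 0 : use coefficient at l*k'
      have hmon : ((X : ℂ[X]) ^ k' - C c').Monic := monic_X_pow_sub_C c' (by omega)
      have hmon2 : (((X : ℂ[X]) ^ k' - C c') ^ l).Monic := hmon.pow l
      have hnd : (((X : ℂ[X]) ^ k' - C c') ^ l).natDegree = l * k' := by
        rw [natDegree_pow, natDegree_X_pow_sub_C]
      have hco2 : F.coeff (l * k') = a + 1 := by
        rw [hF, coeff_add, coeff_C_mul, coeff_X_pow, if_pos rfl, mul_one]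
        congr 1
        have := hmon2.coeff_natDegree
        rwa [hnd] at this
      have : l * k' ≤ F.natDegree := le_natDegree_of_ne_zero (by rw [hco2]; exact hA)
      have h2 : 2 ≤ l * k' := by
        calc 2 ≤ l * 1 := by omega
          _ ≤ l * k' := Nat.mul_le_mul_left _ hk'
      omega
  -- final arithmetic contradiction
  have hn : 1 ≤ x.natDegree := by omega
  have e1 : m * ((m - 1) * z.natDegree) = (m - 1) * (m * z.natDegree) := by ring
  have e2 : (m - 1) * (m * z.natDegree) = (m - 1) * F.natDegree * x.natDegree := by
    rw [← hde]; ring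
  have e3 : m ≤ (m - 1) * F.natDegree :=
    le_trans (by omega) (Nat.mul_le_mul_left (m - 1) hD2)
  have h1 : m * ((m - 1) * z.natDegree) < m * x.natDegree :=
    (Nat.mul_lt_mul_left (show 0 < m by omega)).mpr hdb
  have h2 : m * x.natDegree ≤ (m - 1) * F.natDegree * x.natDegree :=
    Nat.mul_le_mul_right _ e3
  have hcontra : m * x.natDegree < m * x.natDegree := by
    calc m * x.natDegree ≤ (m - 1) * F.natDegree * x.natDegree := h2
      _ = (m - 1) * (m * z.natDegree) := e2.symm
      _ = m * ((m - 1) * z.natDegree) := e1.symm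
      _ < m * x.natDegree := h1
  exact lt_irrefl _ hcontra
end

section
/- Let ρ, q₀', q₁', q₂' be positive integers with q₀', q₁', q₂' pairwise coprime. The equation ρ² − (1/(q₀'q₁') + 1/(q₀'q₂') + 1/(q₁'q₂'))·ρ + 2/(q₀'q₁'q₂') = 0 holds if and only if either ρ = 1 and, up to reordering, (q₀', q₁', q₂') = (1, 1, s) for some s ∈ ℕ⁺, or ρ = 2 and (q₀', q₁', q₂') = (1, 1, 1). -/
/-!
Clearing denominators turns the equation into `ρ² abc + 2 = ρ (a + b + c)` over the positive
integers. The identity `abc + 2 = a + b + c + (a - 1)(b - 1) + (ab - 1)(c - 1)` gives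
`a + b + c ≤ abc + 2`, with equality exactly when two of `a, b, c` equal `1`. Hence
`ρ² abc + 2 ≤ ρ (abc + 2)`, i.e. `(ρ - 1)(ρ abc - 2) ≤ 0`: either `ρ = 1`, which is the equality
case, or `ρ abc ≤ 2`, which forces `ρ = 2` and `a = b = c = 1`.
-/

namespace GenusZeroDiophantine

variable {a b c : ℕ}

theorem mul_mul_add_two_eq (ha : 0 < a) (hb : 0 < b) (hc : 0 < c) :
    a * b * c + 2 = a + b + c + ((a - 1) * (b - 1) + (a * b - 1) * (c - 1)) := by
  have hab : 1 ≤ a * b := Nat.one_le_iff_ne_zero.2 (by positivity)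
  zify [ha, hb, hc, hab]
  ring

theorem add_add_le_mul_mul_add_two (ha : 0 < a) (hb : 0 < b) (hc : 0 < c) :
    a + b + c ≤ a * b * c + 2 := by
  rw [mul_mul_add_two_eq ha hb hc]
  exact Nat.le_add_right _ _

theorem two_eq_one_of_add_add_eq_mul_mul_add_two (ha : 0 < a) (hb : 0 < b) (hc : 0 < c)
    (h : a + b + c = a * b * c + 2) :
    (a = 1 ∧ b = 1) ∨ (a = 1 ∧ c = 1) ∨ (b = 1 ∧ c = 1) := by
  rw [mul_mul_add_two_eq ha hb hc, left_eq_add, add_eq_zero, mul_eq_zero, mul_eq_zero,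
    Nat.sub_eq_zero_iff_le, Nat.sub_eq_zero_iff_le, Nat.sub_eq_zero_iff_le,
    Nat.sub_eq_zero_iff_le] at h
  have := Nat.le_mul_of_pos_right a hb
  have := Nat.le_mul_of_pos_left b ha
  omega

theorem sq_mul_add_two_eq_mul_add_iff {ρ : ℕ} (ha : 0 < a) (hb : 0 < b) (hc : 0 < c) :
    ρ ^ 2 * (a * b * c) + 2 = ρ * (a + b + c) ↔
      (ρ = 1 ∧ ((a = 1 ∧ b = 1) ∨ (a = 1 ∧ c = 1) ∨ (b = 1 ∧ c = 1))) ∨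
        (ρ = 2 ∧ a = 1 ∧ b = 1 ∧ c = 1) := by
  constructor
  · intro h
    have hm : 0 < a * b * c := by positivity
    have hle : ρ ^ 2 * (a * b * c) + 2 ≤ ρ * (a * b * c + 2) :=
      h ▸ Nat.mul_le_mul_left ρ (add_add_le_mul_mul_add_two ha hb hc)
    rcases Nat.lt_or_ge ρ 2 with hρ | hρ
    · obtain rfl | rfl : ρ = 0 ∨ ρ = 1 := by omega
      · simp at h
      · rw [one_pow, one_mul, one_mul] at h
        exact .inl ⟨rfl, two_eq_one_of_add_add_eq_mul_mul_add_two ha hb hc h.symm⟩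
    · have hρm : ρ * (a * b * c) ≤ 2 := by nlinarith
      obtain ⟨rfl, habc⟩ : ρ = 2 ∧ a * b * c = 1 := by
        constructor <;> nlinarith
      simp only [mul_eq_one] at habc
      exact .inr ⟨rfl, habc.1.1, habc.1.2, habc.2⟩
  · rintro (⟨rfl, ⟨rfl, rfl⟩ | ⟨rfl, rfl⟩ | ⟨rfl, rfl⟩⟩ | ⟨rfl, rfl, rfl, rfl⟩) <;> ring

theorem sq_sub_mul_add_div_eq_zero_iff (ρ : ℕ) (ha : 0 < a) (hb : 0 < b) (hc : 0 < c) :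
    (ρ : ℚ) ^ 2 - (1 / ((a : ℚ) * b) + 1 / ((a : ℚ) * c) + 1 / ((b : ℚ) * c)) * ρ
        + 2 / ((a : ℚ) * b * c) = 0 ↔
      ρ ^ 2 * (a * b * c) + 2 = ρ * (a + b + c) := by
  have hm : ((a * b * c : ℕ) : ℚ) ≠ 0 := by positivity
  have hexpr : (ρ : ℚ) ^ 2 - (1 / ((a : ℚ) * b) + 1 / ((a : ℚ) * c) + 1 / ((b : ℚ) * c)) * ρ
        + 2 / ((a : ℚ) * b * c) =
      (((ρ ^ 2 * (a * b * c) + 2 : ℕ) : ℚ) - ((ρ * (a + b + c) : ℕ) : ℚ)) /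
        ((a * b * c : ℕ) : ℚ) := by
    push_cast at hm ⊢
    field_simp
    ring
  rw [hexpr, div_eq_zero_iff, or_iff_left hm, sub_eq_zero, Nat.cast_inj]

end GenusZeroDiophantine

open GenusZeroDiophantine in
theorem genus_zero_diophantine_general (ρ q₀' q₁' q₂' : ℕ)
    (h₀ : 0 < q₀') (h₁ : 0 < q₁') (h₂ : 0 < q₂') :
    (ρ : ℚ) ^ 2
        - (1 / ((q₀' : ℚ) * q₁') + 1 / ((q₀' : ℚ) * q₂')
            + 1 / ((q₁' : ℚ) * q₂')) * ρ
        + 2 / ((q₀' : ℚ) * q₁' * q₂') = 0 ↔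
      (ρ = 1 ∧ ((q₀' = 1 ∧ q₁' = 1) ∨ (q₀' = 1 ∧ q₂' = 1) ∨
        (q₁' = 1 ∧ q₂' = 1))) ∨
      (ρ = 2 ∧ q₀' = 1 ∧ q₁' = 1 ∧ q₂' = 1) := by
  rw [sq_sub_mul_add_div_eq_zero_iff ρ h₀ h₁ h₂, sq_mul_add_two_eq_mul_add_iff h₀ h₁ h₂]

/-- The Diophantine equation
`ρ² − (1/(q₀'q₁') + 1/(q₀'q₂') + 1/(q₁'q₂'))·ρ + 2/(q₀'q₁'q₂') = 0`
with `q₀', q₁', q₂'` pairwise coprime positive integers holds iff either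
`ρ = 1` and, up to reordering, `(q₀', q₁', q₂') = (1, 1, s)`, or `ρ = 2` and
`(q₀', q₁', q₂') = (1, 1, 1)`. -/
theorem genus_zero_diophantine (ρ q₀' q₁' q₂' : ℕ)
    (hρ : 0 < ρ) (h₀ : 0 < q₀') (h₁ : 0 < q₁') (h₂ : 0 < q₂')
    (h01 : Nat.Coprime q₀' q₁') (h02 : Nat.Coprime q₀' q₂')
    (h12 : Nat.Coprime q₁' q₂') :
    (ρ : ℚ) ^ 2
        - (1 / ((q₀' : ℚ) * q₁') + 1 / ((q₀' : ℚ) * q₂')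
            + 1 / ((q₁' : ℚ) * q₂')) * ρ
        + 2 / ((q₀' : ℚ) * q₁' * q₂') = 0 ↔
      (ρ = 1 ∧ ((q₀' = 1 ∧ q₁' = 1) ∨ (q₀' = 1 ∧ q₂' = 1) ∨
        (q₁' = 1 ∧ q₂' = 1))) ∨
      (ρ = 2 ∧ q₀' = 1 ∧ q₁' = 1 ∧ q₂' = 1) :=
  genus_zero_diophantine_general ρ q₀' q₁' q₂' h₀ h₁ h₂
end

section
/- Suppose x(t), y(t) ∈ ℂ[t] are coprime polynomials, not both constant, and c ∈ ℂ* is such that deg(y(t)^l − c·x(t)^k) = 1, where k > l ≥ 3 and gcd(k,l) = 1. Then this is impossible: no such x, y, c exist. -/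
open Polynomial UniqueFactorizationMonoid UniqueFactorizationDomain

/-- Application of Davenport's lemma in Lemma 5: for `k > l ≥ 3` coprime,
there are no coprime polynomials `x, y ∈ ℂ[t]`, not both constant, and
`c ∈ ℂ*` such that `deg (y^l - c·x^k) = 1`. -/
theorem no_degree_one_difference (k l : ℕ) (hl : 3 ≤ l) (hkl : l < k)
    (hcop : Nat.Coprime k l) (x y : Polynomial ℂ) (hxy : IsCoprime x y)
    (hnc : ¬ (x.natDegree = 0 ∧ y.natDegree = 0)) (c : ℂ) (hc : c ≠ 0) :
    (y ^ l - C c * x ^ k).degree ≠ 1 := by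
  intro hdeg
  classical
  have hl0 : 0 < l := by omega
  have hk0 : 0 < k := by omega
  set z : Polynomial ℂ := y ^ l - C c * x ^ k with hzdef
  have hz0 : z ≠ 0 := by
    intro h
    rw [h] at hdeg
    simp at hdeg
  have hzdeg : z.natDegree = 1 := natDegree_eq_of_degree_eq_some hdeg
  have hCc : IsUnit (C c) := isUnit_C.mpr hc.isUnit
  -- x ≠ 0
  have hx0 : x ≠ 0 := by
    rintro rfl
    have h1 : z = y ^ l := by simp [hzdef, zero_pow hk0.ne']
    rw [h1, natDegree_pow] at hzdeg
    have : l ∣ 1 := ⟨_, hzdeg.symm⟩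
    have := Nat.le_of_dvd one_pos this
    omega
  have hy0 : y ≠ 0 := by
    rintro rfl
    have h1 : z = -(C c * x ^ k) := by simp [hzdef, zero_pow hl0.ne']
    rw [h1, natDegree_neg, natDegree_C_mul hc, natDegree_pow] at hzdeg
    have : k ∣ 1 := ⟨_, hzdeg.symm⟩
    have := Nat.le_of_dvd one_pos this
    omega
  -- set up Mason–Stothers
  set a : Polynomial ℂ := y ^ l with hadef
  set b : Polynomial ℂ := -(C c * x ^ k) with hbdef
  have ha : a ≠ 0 := pow_ne_zero _ hy0
  have hb : b ≠ 0 := neg_ne_zero.mpr (mul_ne_zero (C_ne_zero.mpr hc) (pow_ne_zero _ hx0))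
  have hzc : (-z) ≠ 0 := neg_ne_zero.mpr hz0
  have hsum : a + b + (-z) = 0 := by
    rw [hadef, hbdef, hzdef]; ring
  have hab : IsCoprime a b :=
    ((isCoprime_mul_unit_left_right hCc _ _).mpr (hxy.symm.pow)).neg_right
  have hzab : z = a + b := by rw [hadef, hbdef, hzdef]; ring
  have hbc : IsCoprime b (-z) := by
    rw [hzab]
    have : IsCoprime b (a + b * 1) := (hab.symm).add_mul_left_right 1
    rw [mul_one] at this
    exact this.neg_right
  have hca : IsCoprime (-z) a := by
    rw [hzab]
    have : IsCoprime a (b + a * 1) := hab.add_mul_left_right 1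
    rw [mul_one, add_comm] at this
    exact (this.symm).neg_left
  rcases Polynomial.abc ha hb hzc hab hsum with ⟨h1, h2, _⟩ | ⟨_, _, hd⟩
  · -- degree bounds
    have hcopab : IsCoprime (a * b) (-z) := (hca.symm).mul_left hbc
    have hradsplit : radical (a * b * (-z)) = radical a * radical b * radical (-z) := by
      rw [radical_mul hcopab.isRelPrime, radical_mul hab.isRelPrime]
    have hra : radical a = radical y := by rw [hadef, radical_pow y hl0.ne']
    have hrb : radical b = radical x := by
      rw [hbdef, radical_neg, ← hCc.unit_spec, radical_mul_of_isUnit_left hCc.unit.isUnit, radical_pow x hk0.ne']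
    have hrc : (radical (-z)).natDegree ≤ 1 := by
      rw [radical_neg]
      calc (radical z).natDegree ≤ z.natDegree :=
            natDegree_le_of_dvd (radical_dvd_self (a := z)) hz0
        _ = 1 := hzdeg
    have hray : (radical y).natDegree ≤ y.natDegree :=
      natDegree_le_of_dvd (radical_dvd_self (a := y)) hy0
    have hrax : (radical x).natDegree ≤ x.natDegree :=
      natDegree_le_of_dvd (radical_dvd_self (a := x)) hx0
    have hrne : ∀ p : Polynomial ℂ, radical p ≠ 0 := fun p => radical_ne_zero (a := p)
    have hrad_deg : (radical (a * b * (-z))).natDegree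
        ≤ y.natDegree + x.natDegree + 1 := by
      rw [hradsplit, natDegree_mul (mul_ne_zero (hrne a) (hrne b)) (hrne (-z)),
        natDegree_mul (hrne a) (hrne b), hra, hrb]
      omega
    have hda : a.natDegree = l * y.natDegree := by rw [hadef, natDegree_pow]
    have hdb : b.natDegree = k * x.natDegree := by
      rw [hbdef, natDegree_neg, natDegree_C_mul hc, natDegree_pow]
    rw [hda] at h1
    rw [hdb] at h2
    have hb1 : l * y.natDegree + 1 ≤ y.natDegree + x.natDegree + 1 := le_trans h1 hrad_deg
    have hb2 : k * x.natDegree + 1 ≤ y.natDegree + x.natDegree + 1 := le_trans h2 hrad_deg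
    have hb3 : 3 * y.natDegree ≤ l * y.natDegree := Nat.mul_le_mul_right _ hl
    have hb4 : 4 * x.natDegree ≤ k * x.natDegree := Nat.mul_le_mul_right _ (by omega)
    omega
  · -- derivative case
    rw [derivative_neg, neg_eq_zero] at hd
    have := Polynomial.natDegree_eq_zero_of_derivative_eq_zero hd
    omega
end
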